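/- arXiv:1905.13407 — 4 statements merged into one kernel-verified Lean document; each statement's English description precedes it below -/
import Mathlib

section
/- Under the same setup, the cash-or-nothing valuation holds: e^{-2rτ/σ²} ∫_0^∞ 𝟙_{[K,∞)}(y) ρ(y,S) dy = e^{-2rτ/σ²} N(d_2), where d_2 = (1/√(2τ))(log(S/K) + (2/σ²)(r-q+σ²/2)τ) - √(2τ). -/
/-!
The substitution `y = S e^{μ - √(2τ) s}` has Jacobian `√(2τ) y`, which cancels the factor `1/y`
of the lognormal density `ρ` and turns `ρ` into the standard Gaussian density, while the payoff
region `y ≥ K` becomes `s ≤ (μ + log (S/K)) / √(2τ)`, which is `d₂`. Hence the integral is `N(d₂)`.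
-/

open MeasureTheory

/-- Standard normal CDF. -/
noncomputable def stdN (x : ℝ) : ℝ :=
  ∫ s in Set.Iic x, Real.exp (-s^2 / 2) / Real.sqrt (2 * Real.pi)

open Real Set

/-- The paper's transition density `ρ(y, S)`, with its drift `(2/σ²)(r - q - σ²/2)τ` written `μ`. -/
noncomputable def lognormalDensity (S μ τ y : ℝ) : ℝ :=
  (1 / (2 * Real.sqrt (Real.pi * τ) * y)) * Real.exp (-(Real.log (y / S) - μ)^2 / (4 * τ))

theorem range_mul_exp_sub_mul {S c : ℝ} (hS : 0 < S) (hc : c ≠ 0) (μ : ℝ) :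
    range (fun s => S * exp (μ - c * s)) = Ioi 0 := by
  ext y
  refine ⟨by rintro ⟨s, rfl⟩; exact mul_pos hS (exp_pos _), fun hy => ⟨(μ - log (y / S)) / c, ?_⟩⟩
  simp only
  rw [mul_div_cancel₀ _ hc, sub_sub_cancel, exp_log (div_pos hy hS), mul_div_cancel₀ _ hS.ne']

theorem injective_mul_exp_sub_mul {S c : ℝ} (hS : S ≠ 0) (hc : c ≠ 0) (μ : ℝ) :
    Function.Injective (fun s => S * exp (μ - c * s)) := fun _ _ hab =>
  mul_left_cancel₀ hc (sub_right_injective (exp_injective (mul_left_cancel₀ hS hab)))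

theorem integral_Ioi_zero_eq_integral_comp_mul_exp_sub_mul {E : Type*} [NormedAddCommGroup E]
    [NormedSpace ℝ E] (g : ℝ → E) {S c : ℝ} (hS : 0 < S) (hc : c ≠ 0) (μ : ℝ) :
    ∫ y in Ioi 0, g y = ∫ s, (S * |c| * exp (μ - c * s)) • g (S * exp (μ - c * s)) := by
  have hderiv (s : ℝ) :
      HasDerivAt (fun s => S * exp (μ - c * s)) (S * (exp (μ - c * s) * -c)) s := by
    have := ((hasDerivAt_id s).const_mul c).const_sub μ
    simp only [mul_one] at this
    exact (this.exp).const_mul S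
  rw [← range_mul_exp_sub_mul hS hc μ, ← image_univ,
    integral_image_eq_integral_abs_deriv_smul MeasurableSet.univ
      (fun s _ => (hderiv s).hasDerivWithinAt) (injective_mul_exp_sub_mul hS.ne' hc μ).injOn,
    Measure.restrict_univ]
  congr with s
  rw [abs_mul, abs_mul, abs_neg, abs_of_pos hS, abs_of_pos (exp_pos _), ← mul_assoc, mul_right_comm S]

theorem jacobian_mul_lognormalDensity {S τ : ℝ} (hS : 0 < S) (hτ : 0 < τ) (μ s : ℝ) :
    S * |√(2 * τ)| * exp (μ - √(2 * τ) * s) * lognormalDensity S μ τ (S * exp (μ - √(2 * τ) * s))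
      = exp (-s ^ 2 / 2) / √(2 * π) := by
  have hc2 : √(2 * τ) ^ 2 = 2 * τ := sq_sqrt (by positivity)
  have hsqrt : √(2 * τ) * √(2 * π) = 2 * √(π * τ) := by
    rw [← sqrt_mul (by positivity), show 2 * τ * (2 * π) = 2 ^ 2 * (π * τ) by ring,
      sqrt_mul (by positivity), sqrt_sq (by norm_num)]
  have hexp : -(log (S * exp (μ - √(2 * τ) * s) / S) - μ) ^ 2 / (4 * τ) = -s ^ 2 / 2 := by
    rw [mul_div_cancel_left₀ _ hS.ne', log_exp, sub_sub_cancel_left, neg_sq, mul_pow, hc2]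
    field_simp
    ring
  have hc : 0 < √(2 * τ) := by positivity
  rw [lognormalDensity, hexp, abs_of_pos hc, ← hsqrt]
  field_simp

theorem le_mul_exp_sub_mul_iff {K S c : ℝ} (hK : 0 < K) (hS : 0 < S) (hc : 0 < c) (μ s : ℝ) :
    K ≤ S * exp (μ - c * s) ↔ s ≤ (μ + log (S / K)) / c := by
  rw [le_div_iff₀ hc, ← log_le_log_iff hK (by positivity), log_mul hS.ne' (exp_ne_zero _), log_exp,
    log_div hS.ne' hK.ne']
  constructor <;> intro h <;> linarith

theorem integral_Ioi_ite_le_mul_lognormalDensity {K S τ : ℝ} (hK : 0 < K) (hS : 0 < S)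
    (hτ : 0 < τ) (μ : ℝ) :
    ∫ y in Ioi 0, (if K ≤ y then (1 : ℝ) else 0) * lognormalDensity S μ τ y
      = stdN ((μ + log (S / K)) / √(2 * τ)) := by
  have hc : 0 < √(2 * τ) := by positivity
  rw [integral_Ioi_zero_eq_integral_comp_mul_exp_sub_mul _ hS hc.ne' μ, stdN,
    ← integral_indicator measurableSet_Iic]
  congr with s
  simp only [smul_eq_mul, le_mul_exp_sub_mul_iff hK hS hc, ite_mul, one_mul, zero_mul, mul_ite,
    mul_zero, jacobian_mul_lognormalDensity hS hτ, indicator_apply, mem_Iic]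

/-- Cash-or-nothing valuation: the discounted expectation of the payoff
`𝟙_{[K,∞)}(y)` under the lognormal transition density equals `e^{-2rτ/σ²} N(d₂)`. -/
theorem stmt4 (K σ Δt r q τ : ℝ) (hK : 0 < K) (hσ : 0 < σ) (hΔt : 0 < Δt)
    (hτ : τ = σ^2 * Δt / 2) (S : ℝ) (hS : 0 < S) :
    Real.exp (-2 * r * τ / σ^2) *
      (∫ y in Set.Ioi (0:ℝ),
        (if K ≤ y then (1:ℝ) else 0) *
          ((1 / (2 * Real.sqrt (Real.pi * τ) * y)) *
            Real.exp (-(Real.log (y / S) - (2 / σ^2) * (r - q - σ^2 / 2) * τ)^2 / (4 * τ))))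
    = Real.exp (-2 * r * τ / σ^2) *
        stdN ((Real.log (S / K) + (2 / σ^2) * (r - q + σ^2 / 2) * τ) / Real.sqrt (2 * τ)
          - Real.sqrt (2 * τ)) := by
  have hτ0 : 0 < τ := by rw [hτ]; positivity
  have hd₂ : (log (S / K) + (2 / σ ^ 2) * (r - q + σ ^ 2 / 2) * τ) / √(2 * τ) - √(2 * τ)
      = ((2 / σ ^ 2) * (r - q - σ ^ 2 / 2) * τ + log (S / K)) / √(2 * τ) := by
    have hc : 0 < √(2 * τ) := by positivity
    have hc2 : √(2 * τ) ^ 2 = 2 * τ := sq_sqrt (by positivity)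
    field_simp
    rw [hc2]
    ring
  rw [hd₂, ← integral_Ioi_ite_le_mul_lognormalDensity hK hS hτ0]
  rfl
end

section
/- Under the Bermudan put recursion with q_m ≥ 0 and all 1 ≤ m ≤ M-1, the optimal early-exercise level K_m^- = inf{S > 0 : Ṽ_m(S) > K - S} is well-defined and finite (the set is nonempty), and if K_m^- > 0 then Ṽ_m(S) > K - S for all S > K_m^- and Ṽ_m(S) < K - S for all 0 < S < K_m^-. -/
/-- The optimal early-exercise level `K_m^- = inf{S > 0 : Ṽ_m(S) > K - S}` of a
Bermudan put is well defined (the set is nonempty, hence the infimum is a finite real),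
and if `K_m^- > 0` then `Ṽ_m(S) > K - S` for `S > K_m^-` while `Ṽ_m(S) < K - S`
for `0 < S < K_m^-`. -/
theorem stmt8 (K : ℝ) (hK : 0 < K) (Vt : ℝ → ℝ)
    (hpos : ∀ S : ℝ, 0 < S → 0 < Vt S)
    (hlip : ∀ S1 S2 : ℝ, 0 < S1 → S1 < S2 →
      0 < Vt S1 - Vt S2 ∧ Vt S1 - Vt S2 < S2 - S1) :
    {S : ℝ | 0 < S ∧ K - S < Vt S}.Nonempty ∧
    (0 < sInf {S : ℝ | 0 < S ∧ K - S < Vt S} →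
      (∀ S : ℝ, sInf {S : ℝ | 0 < S ∧ K - S < Vt S} < S → K - S < Vt S) ∧
      (∀ S : ℝ, 0 < S → S < sInf {S : ℝ | 0 < S ∧ K - S < Vt S} → Vt S < K - S)) := by
  set A : Set ℝ := {S : ℝ | 0 < S ∧ K - S < Vt S} with hA
  have hg : ∀ S1 S2 : ℝ, 0 < S1 → S1 < S2 →
      Vt S1 - (K - S1) < Vt S2 - (K - S2) := by
    intro S1 S2 h1 h12
    have := (hlip S1 S2 h1 h12).2
    linarith
  have hne : A.Nonempty := ⟨K, hK, by simpa using hpos K hK⟩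
  have hbdd : BddBelow A := ⟨0, fun x hx => le_of_lt hx.1⟩
  have hnotmem : ∀ S : ℝ, S < sInf A → S ∉ A := by
    intro S hS hmem
    exact absurd (csInf_le hbdd hmem) (not_le.mpr hS)
  refine ⟨hne, fun hc => ⟨?_, ?_⟩⟩
  · intro S hS
    obtain ⟨a, haA, haS⟩ := Real.lt_sInf_add_pos hne (by linarith : (0:ℝ) < S - sInf A)
    have haS' : a < S := by linarith
    have h0 : 0 < Vt a - (K - a) := by have := haA.2; linarith
    have := hg a S haA.1 haS'
    linarith
  · intro S hS hSc
    set S' := (S + sInf A) / 2 with hS'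
    have h1 : S < S' := by simp [hS']; linarith
    have h2 : S' < sInf A := by simp [hS']; linarith
    have hnm : S' ∉ A := hnotmem S' h2
    have hle : Vt S' ≤ K - S' := by
      by_contra h
      exact hnm ⟨by linarith, not_le.mp h⟩
    have := hg S S' hS h1
    linarith
end

section
/- Let f : (0,∞) → ℝ satisfy 0 < f(S_1) - f(S_2) ≤ S_2 - S_1 for all 0 < S_1 < S_2, with strict inequality f(S_1) - f(S_2) < S_2 - S_1 whenever S_2 ≥ c (for some fixed c ≥ 0), and equality f(S_1)-f(S_2) = S_2-S_1 when S_2 < c. Let ρ be a probability-type density on (0,∞) with finite first moment μ = ∫_0^∞ z ρ(z) dz, and let g(S) = β ∫_0^∞ f(Sz) ρ(z) dz where β > 0 satisfies βμ ≤ 1. Then for all 0 < S_1 < S_2: 0 < g(S_1) - g(S_2) < S_2 - S_1, provided ∫_0^∞ z ρ(z) dz splits with positive mass on both (0, c/S_2) and (c/S_2, ∞) or c = 0. -/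
/-!
Writing `g(S) = β ∫ f(S z) ρ(z) dz`, the difference `g(S₁) - g(S₂)` is `β` times the integral of
`(f(S₁ z) - f(S₂ z)) ρ(z)`. Pointwise this integrand is positive and at most `(S₂ - S₁) z ρ(z)`,
with strict inequality once `S₂ z ≥ c`, i.e. on the half-line `z > c / S₂`, which has positive
Lebesgue measure. Integrating gives `0 < g(S₁) - g(S₂) < β (S₂ - S₁) μ ≤ S₂ - S₁`.
-/

open MeasureTheory Set

theorem setIntegral_lt_setIntegral_of_le_of_lt_on {α : Type*} [MeasurableSpace α]
    {μ : Measure α} {s t : Set α} {φ ψ : α → ℝ} (hs : MeasurableSet s) (hts : t ⊆ s)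
    (ht : μ t ≠ 0) (hφ : IntegrableOn φ s μ) (hψ : IntegrableOn ψ s μ)
    (hle : ∀ x ∈ s, φ x ≤ ψ x) (hlt : ∀ x ∈ t, φ x < ψ x) :
    ∫ x in s, φ x ∂μ < ∫ x in s, ψ x ∂μ := by
  rw [← sub_pos, ← integral_sub hψ hφ]
  refine (setIntegral_pos_iff_support_of_nonneg_ae (f := ψ - φ) ?_ (hψ.sub hφ)).mpr ?_
  · filter_upwards [ae_restrict_mem hs] with x hx
    exact sub_nonneg.mpr (hle x hx)
  · refine (pos_iff_ne_zero.mpr ht).trans_le (measure_mono fun x hx => ⟨?_, hts hx⟩)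
    exact (sub_pos.mpr (hlt x hx)).ne'

section Increment

variable {c : ℝ} {f ρ : ℝ → ℝ} {S1 S2 : ℝ}

theorem integrableOn_sub_comp_mul
    (hfi : ∀ S : ℝ, 0 < S → IntegrableOn (fun z => f (S * z) * ρ z) (Ioi 0))
    (hS1 : 0 < S1) (hS2 : 0 < S2) :
    IntegrableOn (fun z => (f (S1 * z) - f (S2 * z)) * ρ z) (Ioi 0) := by
  simpa only [sub_mul, Pi.sub_def] using (hfi S1 hS1).sub (hfi S2 hS2)

theorem setIntegral_sub_comp_mul_pos
    (hf1 : ∀ S1 S2 : ℝ, 0 < S1 → S1 < S2 → 0 < f S1 - f S2 ∧ f S1 - f S2 ≤ S2 - S1)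
    (hρ : ∀ z : ℝ, 0 < z → 0 < ρ z)
    (hfi : ∀ S : ℝ, 0 < S → IntegrableOn (fun z => f (S * z) * ρ z) (Ioi 0))
    (hS1 : 0 < S1) (h12 : S1 < S2) :
    0 < ∫ z in Ioi (0:ℝ), (f (S1 * z) - f (S2 * z)) * ρ z := by
  have hpos : ∀ z ∈ Ioi (0:ℝ), 0 < (f (S1 * z) - f (S2 * z)) * ρ z := fun z (hz : 0 < z) =>
    mul_pos (hf1 _ _ (mul_pos hS1 hz) (mul_lt_mul_of_pos_right h12 hz)).1 (hρ z hz)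
  simpa using setIntegral_lt_setIntegral_of_le_of_lt_on measurableSet_Ioi subset_rfl (by simp)
    integrableOn_zero (integrableOn_sub_comp_mul hfi hS1 (hS1.trans h12))
    (fun z hz => (hpos z hz).le) hpos

theorem setIntegral_sub_comp_mul_lt_mul_firstMoment
    (hf1 : ∀ S1 S2 : ℝ, 0 < S1 → S1 < S2 → 0 < f S1 - f S2 ∧ f S1 - f S2 ≤ S2 - S1)
    (hfs : ∀ S1 S2 : ℝ, 0 < S1 → S1 < S2 → c ≤ S2 → f S1 - f S2 < S2 - S1)
    (hρ : ∀ z : ℝ, 0 < z → 0 < ρ z)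
    (hfi : ∀ S : ℝ, 0 < S → IntegrableOn (fun z => f (S * z) * ρ z) (Ioi 0))
    (hμi : IntegrableOn (fun z => z * ρ z) (Ioi 0)) (hS1 : 0 < S1) (h12 : S1 < S2) :
    ∫ z in Ioi (0:ℝ), (f (S1 * z) - f (S2 * z)) * ρ z
      < (S2 - S1) * ∫ z in Ioi (0:ℝ), z * ρ z := by
  have hS2 : 0 < S2 := hS1.trans h12
  rw [← integral_const_mul]
  refine setIntegral_lt_setIntegral_of_le_of_lt_on measurableSet_Ioi
    (Ioi_subset_Ioi (le_max_left 0 (c / S2))) (by simp) (integrableOn_sub_comp_mul hfi hS1 hS2)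
    (hμi.const_mul _) ?_ ?_
  · intro z (hz : 0 < z)
    calc (f (S1 * z) - f (S2 * z)) * ρ z ≤ (S2 * z - S1 * z) * ρ z :=
          mul_le_mul_of_nonneg_right
            (hf1 _ _ (mul_pos hS1 hz) (mul_lt_mul_of_pos_right h12 hz)).2 (hρ z hz).le
      _ = (S2 - S1) * (z * ρ z) := by ring
  · intro z hz
    obtain ⟨hz, hcz⟩ := max_lt_iff.mp (mem_Ioi.mp hz)
    have hc : c ≤ S2 * z := by linarith [(div_lt_iff₀ hS2).mp hcz]
    calc (f (S1 * z) - f (S2 * z)) * ρ z < (S2 * z - S1 * z) * ρ z :=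
          mul_lt_mul_of_pos_right
            (hfs _ _ (mul_pos hS1 hz) (mul_lt_mul_of_pos_right h12 hz) hc) (hρ z hz)
      _ = (S2 - S1) * (z * ρ z) := by ring

end Increment

theorem stmt10_general (c : ℝ) (f : ℝ → ℝ)
    (hf1 : ∀ S1 S2 : ℝ, 0 < S1 → S1 < S2 → 0 < f S1 - f S2 ∧ f S1 - f S2 ≤ S2 - S1)
    (hfs : ∀ S1 S2 : ℝ, 0 < S1 → S1 < S2 → c ≤ S2 → f S1 - f S2 < S2 - S1)
    (ρ : ℝ → ℝ) (hρ : ∀ z : ℝ, 0 < z → 0 < ρ z)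
    (μ β : ℝ) (hβ : 0 < β)
    (hμ : μ = ∫ z in Set.Ioi (0:ℝ), z * ρ z)
    (hμi : IntegrableOn (fun z => z * ρ z) (Set.Ioi 0))
    (hfi : ∀ S : ℝ, 0 < S → IntegrableOn (fun z => f (S * z) * ρ z) (Set.Ioi 0))
    (hβμ : β * μ ≤ 1) :
    ∀ S1 S2 : ℝ, 0 < S1 → S1 < S2 →
      (c = 0 ∨ (0 < ∫ z in Set.Ioo (0:ℝ) (c / S2), z * ρ z ∧
                0 < ∫ z in Set.Ioi (c / S2), z * ρ z)) →
      0 < (β * ∫ z in Set.Ioi (0:ℝ), f (S1 * z) * ρ z) -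
            (β * ∫ z in Set.Ioi (0:ℝ), f (S2 * z) * ρ z) ∧
      (β * ∫ z in Set.Ioi (0:ℝ), f (S1 * z) * ρ z) -
            (β * ∫ z in Set.Ioi (0:ℝ), f (S2 * z) * ρ z) < S2 - S1 := by
  intro S1 S2 hS1 h12 _
  rw [← mul_sub, ← integral_sub (hfi S1 hS1) (hfi S2 (hS1.trans h12))]
  simp only [← sub_mul]
  refine ⟨mul_pos hβ (setIntegral_sub_comp_mul_pos hf1 hρ hfi hS1 h12), ?_⟩
  calc β * ∫ z in Ioi (0:ℝ), (f (S1 * z) - f (S2 * z)) * ρ z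
      < β * ((S2 - S1) * μ) := by
        rw [hμ]
        exact mul_lt_mul_of_pos_left
          (setIntegral_sub_comp_mul_lt_mul_firstMoment hf1 hfs hρ hfi hμi hS1 h12) hβ
    _ = (S2 - S1) * (β * μ) := by ring
    _ ≤ S2 - S1 := mul_le_of_le_one_right (sub_nonneg.mpr h12.le) hβμ

/-- Key inductive step of the monotone-Lipschitz propagation: if `f` is strictly
decreasing with increment bounded by `S₂ - S₁` (strictly when `S₂ ≥ c`, with equality
when `S₂ < c`), and `g(S) = β ∫₀^∞ f(Sz) ρ(z) dz` with `β μ ≤ 1`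
(`μ` the first moment of `ρ`), then `0 < g(S₁) - g(S₂) < S₂ - S₁` for `0 < S₁ < S₂`,
provided the first-moment integral has positive mass on both `(0, c/S₂)` and
`(c/S₂, ∞)`, or `c = 0`. -/
theorem stmt10 (c : ℝ) (hc : 0 ≤ c) (f : ℝ → ℝ)
    (hf1 : ∀ S1 S2 : ℝ, 0 < S1 → S1 < S2 → 0 < f S1 - f S2 ∧ f S1 - f S2 ≤ S2 - S1)
    (hfs : ∀ S1 S2 : ℝ, 0 < S1 → S1 < S2 → c ≤ S2 → f S1 - f S2 < S2 - S1)
    (hfe : ∀ S1 S2 : ℝ, 0 < S1 → S1 < S2 → S2 < c → f S1 - f S2 = S2 - S1)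
    (ρ : ℝ → ℝ) (hρ : ∀ z : ℝ, 0 < z → 0 < ρ z)
    (μ β : ℝ) (hβ : 0 < β)
    (hμ : μ = ∫ z in Set.Ioi (0:ℝ), z * ρ z)
    (hμi : IntegrableOn (fun z => z * ρ z) (Set.Ioi 0))
    (hfi : ∀ S : ℝ, 0 < S → IntegrableOn (fun z => f (S * z) * ρ z) (Set.Ioi 0))
    (hβμ : β * μ ≤ 1) :
    ∀ S1 S2 : ℝ, 0 < S1 → S1 < S2 →
      (c = 0 ∨ (0 < ∫ z in Set.Ioo (0:ℝ) (c / S2), z * ρ z ∧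
                0 < ∫ z in Set.Ioi (c / S2), z * ρ z)) →
      0 < (β * ∫ z in Set.Ioi (0:ℝ), f (S1 * z) * ρ z) -
            (β * ∫ z in Set.Ioi (0:ℝ), f (S2 * z) * ρ z) ∧
      (β * ∫ z in Set.Ioi (0:ℝ), f (S1 * z) * ρ z) -
            (β * ∫ z in Set.Ioi (0:ℝ), f (S2 * z) * ρ z) < S2 - S1 :=
  stmt10_general c f hf1 hfs ρ hρ μ β hβ hμ hμi hfi hβμ
end

section
/- Suppose the true values Ṽ_m and truncated values G̃_m satisfy the recursions Ṽ_{m-1} = T_m(Ṽ_m χ_{(K_m^-, K_m^+)}) + E_m and G̃_{m-1} = T_m(G̃_m χ_{(L_m^-, L_m^+)}) + E_m, with G̃_{M-1} = Ṽ_{M-1}, where L_m^+ = min{K_m^+, S_0C}, L_m^- = max{K_m^-, S_0/C}. If |Ṽ_m(y)| ≤ g(y) := αy + β for all y > 0 and all m, and Q̃_m is defined by Q̃_{M-1}=0 and Q̃_{m-1} = T_m(Q̃_m) + T_m(g χ_{(0,S_0/C] ∪ [S_0C, ∞)}), then |Ṽ_m - G̃_m| ≤ Q̃_m pointwise for all 0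 ≤ m ≤ M-1. -/
/-- The truncation errors of the recursively defined values are dominated by the
recursively defined error bounds: `|Ṽ_m - G̃_m| ≤ Q̃_m` pointwise for `0 ≤ m ≤ M-1`. -/
theorem stmt14 (M : ℕ) (hM : 2 ≤ M)
    (T : ℕ → (ℝ → ℝ) → (ℝ → ℝ))
    (hadd : ∀ m (f g : ℝ → ℝ), T m (f + g) = T m f + T m g)
    (hmono : ∀ m (f g : ℝ → ℝ), (∀ x, 0 ≤ f x) → (∀ x, f x ≤ g x) →
      ∀ x, T m f x ≤ T m g x)
    (Km Kp : ℕ → EReal) (hKm : ∀ m, (0 : EReal) ≤ Km m) (hKmKp : ∀ m, Km m ≤ Kp m)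
    (S0 C α β : ℝ) (hS0 : 0 < S0) (hC : 1 < C) (hα : 0 ≤ α) (hβ : 0 ≤ β)
    (E : ℕ → ℝ → ℝ) (V G Q : ℕ → ℝ → ℝ)
    (hVb : ∀ m (y : ℝ), 0 < y → |V m y| ≤ α * y + β)
    (hGM : G (M - 1) = V (M - 1))
    (hQM : Q (M - 1) = 0)
    (hVrec : ∀ m, 1 ≤ m → m ≤ M - 1 →
      V (m - 1) = T m (Set.indicator {y : ℝ | Km m < (y : EReal) ∧ (y : EReal) < Kp m}
        (V m)) + E m)
    (hGrec : ∀ m, 1 ≤ m → m ≤ M - 1 →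
      G (m - 1) = T m (Set.indicator
        {y : ℝ | max (Km m) ((S0 / C : ℝ) : EReal) < (y : EReal) ∧
                 (y : EReal) < min (Kp m) ((S0 * C : ℝ) : EReal)}
        (G m)) + E m)
    (hQrec : ∀ m, 1 ≤ m → m ≤ M - 1 →
      Q (m - 1) = T m (Q m) + T m (Set.indicator
        {y : ℝ | (0 < y ∧ y ≤ S0 / C) ∨ S0 * C ≤ y} (fun y => α * y + β))) :
    ∀ m, m ≤ M - 1 → ∀ S : ℝ, |V m S - G m S| ≤ Q m S := by
  -- basic properties of T
  have hT0 : ∀ m, T m (0 : ℝ → ℝ) = 0 := by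
    intro m
    have h := hadd m 0 0
    rw [add_zero] at h
    exact left_eq_add.mp h
  have hTsub : ∀ m (a b : ℝ → ℝ), T m (a - b) = T m a - T m b := by
    intro m a b
    have e : b + (a - b) = a := by abel
    have h := hadd m b (a - b)
    rw [e] at h
    exact eq_sub_of_add_eq' h.symm
  have hTnn : ∀ m (f : ℝ → ℝ), (∀ x, 0 ≤ f x) → ∀ x, 0 ≤ T m f x := by
    intro m f hf x
    have h := hmono m 0 f (fun x => le_rfl) hf x
    rw [hT0 m] at h
    simpa using h
  have habs : ∀ m (h : ℝ → ℝ) (x : ℝ), |T m h x| ≤ T m (fun y => |h y|) x := by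
    intro m h x
    have h1 : 0 ≤ T m ((fun y => |h y|) - h) x :=
      hTnn m _ (fun y => by simp only [Pi.sub_apply]; exact sub_nonneg.mpr (le_abs_self _)) x
    have h2 : 0 ≤ T m ((fun y => |h y|) + h) x :=
      hTnn m _ (fun y => by
        simp only [Pi.add_apply]
        have := neg_abs_le (h y); linarith) x
    rw [hTsub] at h1
    rw [hadd] at h2
    simp only [Pi.sub_apply, Pi.add_apply] at h1 h2
    rw [abs_le]
    constructor <;> linarith
  -- nonnegativity of the extra term
  set Bset : Set ℝ := {y : ℝ | (0 < y ∧ y ≤ S0 / C) ∨ S0 * C ≤ y} with hBdef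
  have hBnn : ∀ y, 0 ≤ Set.indicator Bset (fun y => α * y + β) y := by
    intro y
    apply Set.indicator_nonneg
    intro z hz
    have hz0 : 0 < z := by
      rcases hz with ⟨h1, _⟩ | h2
      · exact h1
      · nlinarith
    nlinarith [mul_nonneg hα hz0.le]
  -- main downward induction
  have key : ∀ j, j ≤ M - 1 →
      (∀ x, 0 ≤ Q (M - 1 - j) x) ∧
      (∀ S : ℝ, |V (M - 1 - j) S - G (M - 1 - j) S| ≤ Q (M - 1 - j) S) := by
    intro j
    induction j with
    | zero =>
      intro _
      simp only [Nat.sub_zero]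
      refine ⟨?_, ?_⟩
      · intro x; rw [hQM]; simp
      · intro S; rw [hGM, hQM]; simp
    | succ j ih =>
      intro hj
      have hj' : j ≤ M - 1 := Nat.le_of_succ_le hj
      obtain ⟨ihQ, ihV⟩ := ih hj'
      set n := M - 1 - (j + 1) with hndef
      have hn1 : n + 1 = M - 1 - j := by omega
      have h1 : 1 ≤ n + 1 := by omega
      have h2 : n + 1 ≤ M - 1 := by omega
      rw [← hn1] at ihQ ihV
      have hVr := hVrec (n + 1) h1 h2
      have hGr := hGrec (n + 1) h1 h2
      have hQr := hQrec (n + 1) h1 h2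
      simp only [Nat.add_sub_cancel] at hVr hGr hQr
      set Kset : Set ℝ :=
        {y : ℝ | Km (n + 1) < (y : EReal) ∧ (y : EReal) < Kp (n + 1)} with hKdef
      set Lset : Set ℝ :=
        {y : ℝ | max (Km (n + 1)) ((S0 / C : ℝ) : EReal) < (y : EReal) ∧
                 (y : EReal) < min (Kp (n + 1)) ((S0 * C : ℝ) : EReal)} with hLdef
      have hptw : ∀ y : ℝ,
          |Set.indicator Kset (V (n + 1)) y - Set.indicator Lset (G (n + 1)) y|
            ≤ Q (n + 1) y + Set.indicator Bset (fun y => α * y + β) y := by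
        intro y
        by_cases hyL : y ∈ Lset
        · have hyK : y ∈ Kset := by
            obtain ⟨hl1, hl2⟩ := hyL
            exact ⟨lt_of_le_of_lt (le_max_left _ _) hl1,
              lt_of_lt_of_le hl2 (min_le_left _ _)⟩
          rw [Set.indicator_of_mem hyL, Set.indicator_of_mem hyK]
          exact le_add_of_le_of_nonneg (ihV y) (hBnn y)
        · by_cases hyK : y ∈ Kset
          · rw [Set.indicator_of_notMem hyL, Set.indicator_of_mem hyK, sub_zero]
            obtain ⟨hk1, hk2⟩ := hyK
            have hy0 : 0 < y := by
              have : (0 : EReal) < (y : EReal) := lt_of_le_of_lt (hKm (n + 1)) hk1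
              exact_mod_cast this
            have hyB : y ∈ Bset := by
              rw [hLdef] at hyL
              simp only [Set.mem_setOf_eq, not_and, not_lt] at hyL
              by_cases hmax : max (Km (n + 1)) ((S0 / C : ℝ) : EReal) < (y : EReal)
              · have hmin := hyL hmax
                rcases min_le_iff.mp hmin with h | h
                · exact absurd h (not_le.mpr hk2)
                · right
                  exact_mod_cast h
              · have hle : (y : EReal) ≤ max (Km (n + 1)) ((S0 / C : ℝ) : EReal) :=
                  not_lt.mp hmax
                rcases le_max_iff.mp hle with h | h
                · exact absurd h (not_le.mpr hk1)
                · left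
                  exact ⟨hy0, by exact_mod_cast h⟩
            rw [Set.indicator_of_mem hyB]
            have hV := hVb (n + 1) y hy0
            have hQ := ihQ y
            linarith
          · rw [Set.indicator_of_notMem hyL, Set.indicator_of_notMem hyK]
            simpa using add_nonneg (ihQ y) (hBnn y)
      refine ⟨?_, ?_⟩
      · intro x
        rw [hQr]
        exact add_nonneg (hTnn _ _ ihQ x)
          (hTnn _ _ (fun y => hBnn y) x)
      · intro S
        have hdiff : V n S - G n S =
            T (n + 1) (Set.indicator Kset (V (n + 1)) -
              Set.indicator Lset (G (n + 1))) S := by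
          rw [hTsub, hVr, hGr]
          simp [Pi.sub_apply, Pi.add_apply]
        rw [hdiff]
        calc |T (n + 1) (Set.indicator Kset (V (n + 1)) -
                Set.indicator Lset (G (n + 1))) S|
            ≤ T (n + 1) (fun y => |(Set.indicator Kset (V (n + 1)) -
                Set.indicator Lset (G (n + 1))) y|) S := habs _ _ _
          _ ≤ T (n + 1) (Q (n + 1) +
                Set.indicator Bset (fun y => α * y + β)) S := by
              refine hmono _ _ _ (fun y => abs_nonneg _) (fun y => ?_) S
              simpa [Pi.sub_apply, Pi.add_apply] using hptw y
          _ = Q n S := by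
              rw [hadd, hQr]
  intro m hm S
  have h := (key (M - 1 - m) (by omega)).2
  have he : M - 1 - (M - 1 - m) = m := by omega
  rw [he] at h
  exact h S
end
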